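/- Define F(x) = ∫_{−∞}^{x} φ(u)·1_{u > 0} du + ∫_{−∞}^{x} φ(u)·(1 − Φ(u)) du. Then sup over x ∈ ℝ of |Φ(x) − F(x)| = 1/8. -/

import Mathlib

open MeasureTheory Set Filter Topology
set_option maxHeartbeats 1000000

noncomputable def stdPhi (x : ℝ) : ℝ := (Real.sqrt (2 * Real.pi))⁻¹ * Real.exp (-x ^ 2 / 2)

noncomputable def stdPhiCdf (x : ℝ) : ℝ := ∫ t in Set.Iio x, stdPhi t

noncomputable def Fcdf (x : ℝ) : ℝ :=
  (∫ u in Set.Iio x, stdPhi u * (if 0 < u then (1 : ℝ) else 0)) +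
    ∫ u in Set.Iio x, stdPhi u * (1 - stdPhiCdf u)

lemma stdPhi_eq : stdPhi = ProbabilityTheory.gaussianPDFReal 0 1 := by
  funext x
  simp [stdPhi, ProbabilityTheory.gaussianPDFReal]

lemma stdPhi_nonneg (x : ℝ) : 0 ≤ stdPhi x := by
  rw [stdPhi_eq]; exact ProbabilityTheory.gaussianPDFReal_nonneg 0 1 x

lemma integrable_stdPhi : Integrable stdPhi := by
  rw [stdPhi_eq]; exact ProbabilityTheory.integrable_gaussianPDFReal 0 1

lemma integral_stdPhi : ∫ x, stdPhi x = 1 := by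
  rw [stdPhi_eq]; exact ProbabilityTheory.integral_gaussianPDFReal_eq_one 0 one_ne_zero

lemma continuous_stdPhi : Continuous stdPhi := by
  unfold stdPhi; fun_prop

lemma stdPhiCdf_eq_Iic (x : ℝ) : stdPhiCdf x = ∫ t in Set.Iic x, stdPhi t :=
  (integral_Iic_eq_integral_Iio).symm

lemma stdPhiCdf_sub (a b : ℝ) : stdPhiCdf b - stdPhiCdf a = ∫ t in a..b, stdPhi t := by
  have ha : IntegrableOn stdPhi (Set.Iic a) volume := integrable_stdPhi.integrableOn
  have hb : IntegrableOn stdPhi (Set.Iic b) volume := integrable_stdPhi.integrableOn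
  rw [stdPhiCdf_eq_Iic, stdPhiCdf_eq_Iic]
  exact intervalIntegral.integral_Iic_sub_Iic ha hb

lemma hasDerivAt_stdPhiCdf (x : ℝ) : HasDerivAt stdPhiCdf (stdPhi x) x := by
  have h : stdPhiCdf = fun y => stdPhiCdf 0 + ∫ t in (0:ℝ)..y, stdPhi t := by
    funext y
    rw [← stdPhiCdf_sub 0 y]; ring
  rw [h]
  exact (intervalIntegral.integral_hasDerivAt_right
    (integrable_stdPhi.intervalIntegrable)
    (continuous_stdPhi.aestronglyMeasurable.stronglyMeasurableAtFilter)
    continuous_stdPhi.continuousAt).const_add _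

lemma continuous_stdPhiCdf : Continuous stdPhiCdf :=
  continuous_iff_continuousAt.2 fun x => (hasDerivAt_stdPhiCdf x).continuousAt

lemma monotone_stdPhiCdf : Monotone stdPhiCdf := by
  intro a b hab
  have : 0 ≤ stdPhiCdf b - stdPhiCdf a := by
    rw [stdPhiCdf_sub]
    exact intervalIntegral.integral_nonneg hab (fun u _ => stdPhi_nonneg u)
  linarith

lemma stdPhiCdf_nonneg (x : ℝ) : 0 ≤ stdPhiCdf x :=
  setIntegral_nonneg measurableSet_Iio (fun u _ => stdPhi_nonneg u)

lemma stdPhiCdf_le_one (x : ℝ) : stdPhiCdf x ≤ 1 := by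
  rw [← integral_stdPhi]
  exact setIntegral_le_integral integrable_stdPhi
    (Filter.Eventually.of_forall fun u => stdPhi_nonneg u)

lemma tendsto_stdPhiCdf_atBot : Tendsto stdPhiCdf atBot (𝓝 0) := by
  have h : stdPhiCdf = fun y => stdPhiCdf 0 - ∫ t in y..(0:ℝ), stdPhi t := by
    funext y
    rw [← stdPhiCdf_sub y 0]; ring
  rw [h]
  have := intervalIntegral_tendsto_integral_Iic (0:ℝ)
    (integrable_stdPhi.integrableOn) tendsto_id
  have h2 : Tendsto (fun y => stdPhiCdf 0 - ∫ t in y..(0:ℝ), stdPhi t) atBot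
      (𝓝 (stdPhiCdf 0 - ∫ t in Set.Iic (0:ℝ), stdPhi t)) :=
    tendsto_const_nhds.sub this
  rw [← stdPhiCdf_eq_Iic, sub_self] at h2
  exact h2

lemma stdPhiCdf_zero : stdPhiCdf 0 = 1 / 2 := by
  have hsym : ∫ x in Set.Ioi (0:ℝ), stdPhi x = ∫ x in Set.Iic (0:ℝ), stdPhi x := by
    have h1 : ∫ x in Set.Ioi (0:ℝ), stdPhi (-x) = ∫ x in Set.Iic (-(0:ℝ)), stdPhi x :=
      integral_comp_neg_Ioi 0 stdPhi
    have h2 : ∀ x : ℝ, stdPhi (-x) = stdPhi x := by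
      intro x; simp [stdPhi, neg_sq]
    simp_rw [h2, neg_zero] at h1
    exact h1
  have hadd : (∫ x in Set.Iic (0:ℝ), stdPhi x) + ∫ x in Set.Ioi (0:ℝ), stdPhi x = 1 := by
    rw [intervalIntegral.integral_Iic_add_Ioi integrable_stdPhi.integrableOn integrable_stdPhi.integrableOn]
    exact integral_stdPhi
  rw [stdPhiCdf_eq_Iic]
  rw [hsym] at hadd
  linarith

lemma stdPhiCdf_le_half {x : ℝ} (hx : x ≤ 0) : stdPhiCdf x ≤ 1 / 2 := by
  have := monotone_stdPhiCdf hx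
  rwa [stdPhiCdf_zero] at this

lemma half_le_stdPhiCdf {x : ℝ} (hx : 0 ≤ x) : 1 / 2 ≤ stdPhiCdf x := by
  have := monotone_stdPhiCdf hx
  rwa [stdPhiCdf_zero] at this

/-- The first integral in `Fcdf`. -/
lemma first_integral (x : ℝ) :
    (∫ u in Set.Iio x, stdPhi u * (if 0 < u then (1 : ℝ) else 0)) =
      if 0 < x then stdPhiCdf x - 1 / 2 else 0 := by
  have hind : ∀ u : ℝ, stdPhi u * (if 0 < u then (1 : ℝ) else 0)
      = Set.indicator (Set.Ioi 0) stdPhi u := by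
    intro u
    by_cases h : 0 < u <;> simp [Set.indicator, h]
  simp_rw [hind]
  rw [setIntegral_indicator measurableSet_Ioi]
  by_cases hx : 0 < x
  · rw [if_pos hx]
    have hset : Set.Iio x ∩ Set.Ioi 0 = Set.Ioo 0 x := by
      ext u; simp [Set.mem_Ioo, and_comm]
    rw [hset, ← integral_Ioc_eq_integral_Ioo,
      ← intervalIntegral.integral_of_le hx.le, ← stdPhiCdf_sub, stdPhiCdf_zero]
  · rw [if_neg hx]
    push_neg at hx
    have hset : Set.Iio x ∩ Set.Ioi 0 = ∅ := by
      ext u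
      simp only [Set.mem_inter_iff, Set.mem_Iio, Set.mem_Ioi, Set.mem_empty_iff_false,
        iff_false, not_and]
      intro h1
      linarith
    rw [hset]
    simp

lemma second_integral (x : ℝ) :
    (∫ u in Set.Iio x, stdPhi u * (1 - stdPhiCdf u)) =
      stdPhiCdf x - stdPhiCdf x * stdPhiCdf x / 2 := by
  have hderiv : ∀ y ∈ Set.Iic x, HasDerivAt (fun y => stdPhiCdf y - stdPhiCdf y * stdPhiCdf y / 2)
      (stdPhi y * (1 - stdPhiCdf y)) y := by
    intro y _
    have h := (hasDerivAt_stdPhiCdf y).sub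
      (((hasDerivAt_stdPhiCdf y).mul (hasDerivAt_stdPhiCdf y)).div_const 2)
    exact h.congr_deriv (by ring)
  have hint : IntegrableOn (fun u => stdPhi u * (1 - stdPhiCdf u)) (Set.Iic x) := by
    apply Integrable.mono' (integrable_stdPhi.integrableOn)
    · exact ((continuous_stdPhi.mul
        (continuous_const.sub continuous_stdPhiCdf)).aestronglyMeasurable).restrict
    · refine Filter.Eventually.of_forall fun u => ?_
      have h1 : 0 ≤ 1 - stdPhiCdf u := by linarith [stdPhiCdf_le_one u]
      have h2 : 1 - stdPhiCdf u ≤ 1 := by linarith [stdPhiCdf_nonneg u]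
      rw [Real.norm_eq_abs, abs_of_nonneg (mul_nonneg (stdPhi_nonneg u) h1)]
      nlinarith [stdPhi_nonneg u]
  have htend : Tendsto (fun y => stdPhiCdf y - stdPhiCdf y * stdPhiCdf y / 2) atBot (𝓝 0) := by
    have := tendsto_stdPhiCdf_atBot.sub
      ((tendsto_stdPhiCdf_atBot.mul tendsto_stdPhiCdf_atBot).div_const 2)
    simpa using this
  have := integral_Iic_of_hasDerivAt_of_tendsto' hderiv hint htend
  rw [← integral_Iic_eq_integral_Iio, this, sub_zero]

theorem kolmogorov_sup_eq :
    (⨆ x : ℝ, |stdPhiCdf x - Fcdf x|) = 1 / 8 := by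
  have hb : ∀ x : ℝ, |stdPhiCdf x - Fcdf x| ≤ 1 / 8 := by
    intro x
    rw [Fcdf, first_integral, second_integral]
    have h0 := stdPhiCdf_nonneg x
    have h1 := stdPhiCdf_le_one x
    by_cases hx : 0 < x
    · rw [if_pos hx]
      have h2 := half_le_stdPhiCdf hx.le
      rw [abs_le]; constructor <;> nlinarith
    · rw [if_neg hx]
      push_neg at hx
      have h2 := stdPhiCdf_le_half hx
      rw [abs_le]; constructor <;> nlinarith
  have h0 : |stdPhiCdf 0 - Fcdf 0| = 1 / 8 := by
    rw [Fcdf, first_integral, second_integral, stdPhiCdf_zero]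
    norm_num
  apply le_antisymm
  · exact ciSup_le hb
  · rw [← h0]
    exact le_ciSup (f := fun x : ℝ => |stdPhiCdf x - Fcdf x|) ⟨1 / 8, by rintro y ⟨x, rfl⟩; exact hb x⟩ 0
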